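/- arXiv:1002.0017 — 2 statements merged into one kernel-verified Lean document; each statement's English description precedes it below -/
import Mathlib

section
/- Let 𝒜_1, 𝒜_2 be quasi-orthogonal unital *-subalgebras of M_n(ℂ), let A_1 ∈ 𝒜_1 and A_2 ∈ 𝒜_2 be traceless, and set A = A_1 + A_2. If A² ∈ 𝒜_1 + 𝒜_2 (as a linear subspace), then A_1A_2 + A_2A_1 = 0, i.e., A_1 and A_2 anti-commute. -/
/-!
Put `X = A₁A₂ + A₂A₁ = (A₁ + A₂)² - A₁² - A₂²`, which lies in `V = 𝒜₁ + 𝒜₂` by hypothesis.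
Quasi-orthogonality and tracelessness make `A₁A₂` and `A₂A₁` orthogonal to `V` for the trace
form `⟨B, Y⟩ = τ(BᴴY)`. Since `V` is closed under `ᴴ`, `X` is orthogonal to itself, so `X = 0`.
-/

open Matrix BigOperators

noncomputable section

abbrev Mat (n : ℕ) := Matrix (Fin n) (Fin n) ℂ

/-- Two unital *-subalgebras of `M_n(ℂ)` are quasi-orthogonal iff
`τ(AB) = τ(A)τ(B)` for all members, where `τ = (1/n)Tr`. -/
def QuasiOrth {n : ℕ} (𝒜 ℬ : StarSubalgebra ℂ (Mat n)) : Prop :=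
  ∀ A ∈ 𝒜, ∀ B ∈ ℬ, (n : ℂ) * (A * B).trace = A.trace * B.trace

namespace QuasiOrth

variable {n : ℕ} {𝒜 ℬ : StarSubalgebra ℂ (Mat n)}

theorem symm (h : QuasiOrth 𝒜 ℬ) : QuasiOrth ℬ 𝒜 := fun B hB A hA => by
  rw [trace_mul_comm, h A hA B hB, mul_comm]

theorem trace_mul_eq_zero (h : QuasiOrth 𝒜 ℬ) {A B : Mat n} (hA : A ∈ 𝒜) (hB : B ∈ ℬ)
    (h0 : A.trace * B.trace = 0) : (A * B).trace = 0 := by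
  rcases eq_or_ne n 0 with rfl | hn
  · exact Matrix.trace_fin_zero _
  · rw [← h A hA B hB] at h0
    exact (mul_eq_zero.mp h0).resolve_left (Nat.cast_ne_zero.mpr hn)

theorem trace_mul_mul_eq_zero (h : QuasiOrth 𝒜 ℬ) {A₁ A₂ B : Mat n} (h1 : A₁ ∈ 𝒜) (h2 : A₂ ∈ ℬ)
    (t1 : A₁.trace = 0) (t2 : A₂.trace = 0)
    (hB : B ∈ Subalgebra.toSubmodule 𝒜.toSubalgebra ⊔ Subalgebra.toSubmodule ℬ.toSubalgebra) :
    (B * (A₁ * A₂)).trace = 0 := by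
  obtain ⟨B₁, hB₁, B₂, hB₂, rfl⟩ := Submodule.mem_sup.mp hB
  have e₁ : (B₁ * (A₁ * A₂)).trace = 0 := by
    rw [← Matrix.mul_assoc]
    exact h.trace_mul_eq_zero (mul_mem hB₁ h1) h2 (by rw [t2, mul_zero])
  have e₂ : (B₂ * (A₁ * A₂)).trace = 0 := by
    rw [trace_mul_comm, Matrix.mul_assoc]
    exact h.trace_mul_eq_zero h1 (mul_mem h2 hB₂) (by rw [t1, zero_mul])
  rw [Matrix.add_mul, trace_add, e₁, e₂, add_zero]

end QuasiOrth

theorem StarSubalgebra.star_mem_toSubmodule_sup {R A : Type*} [CommSemiring R] [StarRing R]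
    [Semiring A] [StarRing A] [Algebra R A] [StarModule R A] {𝒜 ℬ : StarSubalgebra R A} {B : A}
    (hB : B ∈ Subalgebra.toSubmodule 𝒜.toSubalgebra ⊔ Subalgebra.toSubmodule ℬ.toSubalgebra) :
    star B ∈ Subalgebra.toSubmodule 𝒜.toSubalgebra ⊔ Subalgebra.toSubmodule ℬ.toSubalgebra := by
  obtain ⟨B₁, hB₁, B₂, hB₂, rfl⟩ := Submodule.mem_sup.mp hB
  rw [star_add]
  exact Submodule.add_mem_sup (star_mem (s := 𝒜) hB₁) (star_mem (s := ℬ) hB₂)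

/-- for quasi-orthogonal `𝒜₁, 𝒜₂` and traceless `A₁ ∈ 𝒜₁`,
`A₂ ∈ 𝒜₂`, if `(A₁ + A₂)² ∈ 𝒜₁ + 𝒜₂` then `A₁` and `A₂` anti-commute. -/
theorem stmt12 {n : ℕ} (𝒜₁ 𝒜₂ : StarSubalgebra ℂ (Mat n))
    (h : QuasiOrth 𝒜₁ 𝒜₂)
    (A₁ A₂ : Mat n) (h1 : A₁ ∈ 𝒜₁) (h2 : A₂ ∈ 𝒜₂)
    (t1 : A₁.trace = 0) (t2 : A₂.trace = 0)
    (hsq : (A₁ + A₂) * (A₁ + A₂) ∈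
      Subalgebra.toSubmodule 𝒜₁.toSubalgebra ⊔ Subalgebra.toSubmodule 𝒜₂.toSubalgebra) :
    A₁ * A₂ + A₂ * A₁ = 0 := by
  set V := Subalgebra.toSubmodule 𝒜₁.toSubalgebra ⊔ Subalgebra.toSubmodule 𝒜₂.toSubalgebra
  set X := A₁ * A₂ + A₂ * A₁ with hX_def
  have hX : X ∈ V := by
    have hX_eq : X = (A₁ + A₂) * (A₁ + A₂) - A₁ * A₁ - A₂ * A₂ := by
      rw [hX_def]; noncomm_ring
    rw [hX_eq]
    exact sub_mem (sub_mem hsq (Submodule.mem_sup_left (mul_mem h1 h1 : A₁ * A₁ ∈ 𝒜₁)))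
      (Submodule.mem_sup_right (mul_mem h2 h2 : A₂ * A₂ ∈ 𝒜₂))
  have hXH : Xᴴ ∈ V := StarSubalgebra.star_mem_toSubmodule_sup hX
  have hV : V = Subalgebra.toSubmodule 𝒜₂.toSubalgebra ⊔ Subalgebra.toSubmodule 𝒜₁.toSubalgebra :=
    sup_comm _ _
  have hself : (Xᴴ * X).trace = 0 := by
    rw [Matrix.mul_add, trace_add, h.trace_mul_mul_eq_zero h1 h2 t1 t2 hXH,
      h.symm.trace_mul_mul_eq_zero h2 h1 t2 t1 (hV ▸ hXH), add_zero]
  open scoped ComplexOrder in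
  exact trace_conjTranspose_mul_self_eq_zero_iff.mp hself
end
end

section
/- If 𝒜, ℬ ⊆ M_n(ℂ) are homogeneously balanced unital *-subalgebras, then c(𝒜',ℬ') = (n² / (dim 𝒜 · dim ℬ)) · c(𝒜,ℬ), where c(𝒳,𝒴) := Tr(E_𝒳 E_𝒴). -/
open Matrix BigOperators

noncomputable section

/-- `E` is the orthogonal projection of `M_n(ℂ)` (with the Hilbert–Schmidt inner
product `⟨X, Y⟩ = Tr(X*Y)`) onto the subspace `S`. -/
def IsHSProj {n : ℕ} (S : Submodule ℂ (Mat n)) (E : Mat n →ₗ[ℂ] Mat n) : Prop :=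
  (∀ X, E X ∈ S) ∧ (∀ X ∈ S, E X = X) ∧
    (∀ X Y, (star (E X) * Y).trace = (star X * E Y).trace)

/-- A unital *-subalgebra `𝒜 ⊆ M_n(ℂ)` is homogeneously balanced if, up to a
unitary conjugation and a reindexing, it is `⊕ₖ (M_{p k}(ℂ) ⊗ 1_{q k})` with the
ratio `p k / q k` independent of `k`. -/
def IsHomBalanced {n : ℕ} (𝒜 : StarSubalgebra ℂ (Mat n)) : Prop :=
  ∃ (ι : Type) (_ : Fintype ι) (_ : DecidableEq ι) (p q : ι → ℕ)
    (e : (Σ k : ι, Fin (p k) × Fin (q k)) ≃ Fin n) (U : Mat n),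
      U * star U = 1 ∧ star U * U = 1 ∧
      (∀ k, 0 < p k ∧ 0 < q k) ∧
      (∀ k l, p k * q l = p l * q k) ∧
      (∀ X : Mat n, X ∈ 𝒜 ↔
        ∃ A : ∀ k, Matrix (Fin (p k)) (Fin (p k)) ℂ,
          X = U * (Matrix.reindex e e (Matrix.blockDiagonal'
            (fun k => Matrix.kroneckerMap (· * ·) (A k)
              (1 : Matrix (Fin (q k)) (Fin (q k)) ℂ)))) * star U)

/-!
A homogeneously balanced `𝒜 ≅ ⊕ₖ M_{p k} ⊗ 1_{q k}` has a Hilbert–Schmidt orthonormal basis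
`(A_j)` of rescaled matrix units `q_k^{-1/2} e_{ab}^{(k)}`. It is closed under adjoints, and the
balance condition `p k / q k = const` is exactly what makes `∑ A_j A_j*` scalar, namely
`(dim 𝒜 / n) • 1`. In such a basis `E_𝒜 X = ∑ Tr(A_j* X) A_j` and
`E_𝒜' X = (n / dim 𝒜) ∑ A_j X A_j*`. As `X ↦ P X Q` has trace `Tr P · Tr Q`, both `Tr(E_𝒜 E_ℬ)`
and `Tr(E_𝒜' E_ℬ')` reduce to `∑ᵢⱼ |Tr(A_i* B_j)|²` (the latter after replacing `A_i` by `A_i*`),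
the second one with the factor `n² / (dim 𝒜 · dim ℬ)`.
-/

open scoped Kronecker ComplexOrder

theorem LinearMap.mulLeftRight_mul_mulLeftRight {R A : Type*} [Semiring R] [Semiring A]
    [Module R A] [SMulCommClass R A A] [IsScalarTower R A A] (a b c d : A) :
    mulLeftRight R (a, b) * mulLeftRight R (c, d) = mulLeftRight R (a * c, d * b) := by
  ext1 x
  simp [mul_assoc]

theorem Matrix.trace_mulLeftRight {R m : Type*} [CommRing R] [Fintype m] [DecidableEq m]
    (P Q : Matrix m m R) :
    LinearMap.trace R (Matrix m m R) (LinearMap.mulLeftRight R (P, Q)) = P.trace * Q.trace := by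
  let vecEquiv : Matrix m m R ≃ₗ[R] (m × m → R) :=
    (transposeLinearEquiv m m R R).trans (LinearEquiv.curry R R m m).symm
  have h : vecEquiv.conj (LinearMap.mulLeftRight R (P, Q)) = toLin' (Qᵀ ⊗ₖ P) := by
    refine LinearMap.ext fun v => ?_
    obtain ⟨X, rfl⟩ := vecEquiv.surjective v
    change vecEquiv (P * vecEquiv.symm (vecEquiv X) * Q) = (Qᵀ ⊗ₖ P) *ᵥ vec X
    rw [LinearEquiv.symm_apply_apply, kronecker_mulVec_vec, transpose_transpose]
    rfl
  rw [← LinearMap.trace_conj' _ vecEquiv, h, trace_toLin'_eq, trace_kronecker, trace_transpose,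
    mul_comm]

section HilbertSchmidt

variable {n : ℕ}

theorem IsHSProj.unique {S : Submodule ℂ (Mat n)} {E F : Mat n →ₗ[ℂ] Mat n}
    (hE : IsHSProj S E) (hF : IsHSProj S F) : E = F := by
  ext1 X
  have hD : E X - F X ∈ S := sub_mem (hE.1 X) (hF.1 X)
  have h : (star (E X - F X) * (E X - F X)).trace = 0 := by
    rw [star_sub, sub_mul, trace_sub, hE.2.2, hF.2.2, hE.2.1 _ hD, hF.2.1 _ hD, sub_self]
  exact sub_eq_zero.mp (trace_conjTranspose_mul_self_eq_zero_iff.mp h)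

def hsRankOne (C D : Mat n) : Mat n →ₗ[ℂ] Mat n :=
  (traceLinearMap (Fin n) ℂ ℂ ∘ₗ LinearMap.mulLeft ℂ (star C)).smulRight D

@[simp]
theorem hsRankOne_apply (C D X : Mat n) : hsRankOne C D X = (star C * X).trace • D := rfl

theorem trace_hsRankOne_comp (C D : Mat n) (F : Mat n →ₗ[ℂ] Mat n) :
    LinearMap.trace ℂ (Mat n) (hsRankOne C D ∘ₗ F) = (star C * F D).trace := by
  rw [LinearMap.trace_comp_comm']
  have : F ∘ₗ hsRankOne C D =
      (traceLinearMap (Fin n) ℂ ℂ ∘ₗ LinearMap.mulLeft ℂ (star C)).smulRight (F D) := by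
    ext1 X
    simp
  rw [this, LinearMap.trace_smulRight]
  rfl

end HilbertSchmidt

section BalancedBasis

variable {n : ℕ} {J : Type*} [Fintype J] [DecidableEq J]

structure IsBalancedBasis (𝒜 : StarSubalgebra ℂ (Mat n)) (A : J → Mat n) (σ : Equiv.Perm J) :
    Prop where
  mem : ∀ j, A j ∈ 𝒜
  trace_star_mul : ∀ i j, (star (A i) * A j).trace = if i = j then 1 else 0
  sum_trace_smul : ∀ X ∈ 𝒜, ∑ j, (star (A j) * X).trace • A j = X
  apply_perm : ∀ j, A (σ j) = star (A j)
  sum_mul_star : (n : ℂ) • ∑ j, A j * star (A j) = (Fintype.card J : ℂ) • 1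

variable {𝒜 : StarSubalgebra ℂ (Mat n)} {A : J → Mat n} {σ : Equiv.Perm J}

namespace IsBalancedBasis

theorem card_eq_finrank (hA : IsBalancedBasis 𝒜 A σ) : Fintype.card J = Module.finrank ℂ 𝒜 := by
  let v : J → 𝒜 := fun j => ⟨A j, hA.mem j⟩
  have hli : LinearIndependent ℂ v := by
    rw [Fintype.linearIndependent_iff]
    intro g hg j
    have := congrArg (fun X : 𝒜 => (star (A j) * (X : Mat n)).trace) hg
    simpa [v, Matrix.mul_sum, hA.trace_star_mul] using this
  have hsp : ⊤ ≤ Submodule.span ℂ (Set.range v) := by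
    rintro ⟨X, hX⟩ -
    have hX' : (⟨X, hX⟩ : 𝒜) = ∑ j, (star (A j) * X).trace • v j :=
      Subtype.ext (by simpa [v] using (hA.sum_trace_smul X hX).symm)
    rw [hX']
    exact Submodule.sum_mem _ fun j _ => Submodule.smul_mem _ _ (Submodule.subset_span ⟨j, rfl⟩)
  exact (Module.finrank_eq_card_basis (Module.Basis.mk hli hsp)).symm

theorem sum_star_mul_mul (hA : IsBalancedBasis 𝒜 A σ) (X : Mat n) :
    ∑ j, star (A j) * X * A j = ∑ j, A j * X * star (A j) := by
  rw [← Equiv.sum_comp σ]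
  simp [hA.apply_perm]

theorem sum_trace_mul_smul_star (hA : IsBalancedBasis 𝒜 A σ) {X : Mat n} (hX : X ∈ 𝒜) :
    ∑ j, (A j * X).trace • star (A j) = X := by
  conv_rhs => rw [← hA.sum_trace_smul X hX, ← Equiv.sum_comp σ]
  simp [hA.apply_perm]

theorem isHSProj_sum_hsRankOne (hA : IsBalancedBasis 𝒜 A σ) :
    IsHSProj (Subalgebra.toSubmodule 𝒜.toSubalgebra) (∑ j, hsRankOne (A j) (A j)) := by
  refine ⟨fun X => ?_, fun X hX => ?_, fun X Y => ?_⟩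
  · simpa using sum_mem fun j _ => SMulMemClass.smul_mem _ (hA.mem j)
  · simpa using hA.sum_trace_smul X hX
  · simp only [LinearMap.sum_apply, hsRankOne_apply, star_sum, star_smul, Finset.sum_mul,
      Matrix.mul_sum, smul_mul, Matrix.mul_smul, trace_sum, trace_smul, smul_eq_mul]
    refine Finset.sum_congr rfl fun j _ => ?_
    have : star (star (A j) * X).trace = (star X * A j).trace := by
      rw [← trace_conjTranspose, ← star_eq_conjTranspose, star_mul, star_star]
    rw [this, mul_comm]

theorem sum_mul_mul_star_mem_centralizer (hA : IsBalancedBasis 𝒜 A σ) (X : Mat n) :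
    ∑ j, A j * X * star (A j) ∈ Subalgebra.centralizer ℂ (𝒜 : Set (Mat n)) := by
  rw [Subalgebra.mem_centralizer_iff]
  intro Y hY
  -- Expanding `Y A_j` in the basis `(A_i)` and `A_j* Y` in the basis `(A_i*)` turns both sides
  -- into `∑ᵢⱼ Tr(A_i* Y A_j) • A_i X A_j*`.
  have hleft : ∀ j, Y * A j = ∑ i, (star (A i) * (Y * A j)).trace • A i :=
    fun j => (hA.sum_trace_smul _ (mul_mem hY (hA.mem j))).symm
  have hright : ∀ j, star (A j) * Y = ∑ i, (A i * (star (A j) * Y)).trace • star (A i) :=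
    fun j => (hA.sum_trace_mul_smul_star (mul_mem (star_mem (hA.mem j)) hY)).symm
  calc Y * ∑ j, A j * X * star (A j)
      = ∑ j, ∑ i, (star (A i) * (Y * A j)).trace • (A i * X * star (A j)) := by
        refine (Finset.mul_sum _ _ _).trans (Finset.sum_congr rfl fun j _ => ?_)
        conv_lhs => rw [← mul_assoc, ← mul_assoc, hleft j, Finset.sum_mul, Finset.sum_mul]
        simp only [smul_mul]
    _ = ∑ i, ∑ j, (A j * (star (A i) * Y)).trace • (A i * X * star (A j)) := by
        rw [Finset.sum_comm]
        simp only [← mul_assoc, trace_mul_comm (star _ * Y)]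
    _ = (∑ i, A i * X * star (A i)) * Y := by
        refine ((Finset.sum_mul _ _ _).trans (Finset.sum_congr rfl fun i _ => ?_)).symm
        conv_lhs => rw [mul_assoc, hright i, Finset.mul_sum]
        simp only [Matrix.mul_smul, mul_assoc]

theorem nonempty [Nontrivial (Mat n)] (hA : IsBalancedBasis 𝒜 A σ) : Nonempty J := by
  by_contra hJ
  rw [not_nonempty_iff] at hJ
  simpa using hA.sum_trace_smul 1 (one_mem 𝒜)

theorem trace_star_sum_mul_mul_star_mul (hA : IsBalancedBasis 𝒜 A σ) (X Y : Mat n) :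
    (star (∑ j, A j * X * star (A j)) * Y).trace = (star X * ∑ j, A j * Y * star (A j)).trace := by
  calc (star (∑ j, A j * X * star (A j)) * Y).trace
      = ∑ j, (star X * (star (A j) * Y * A j)).trace := by
        simp only [star_sum, star_mul, star_star, Finset.sum_mul, trace_sum, mul_assoc]
        refine Finset.sum_congr rfl fun j _ => ?_
        rw [trace_mul_comm, mul_assoc, mul_assoc]
    _ = (star X * ∑ j, A j * Y * star (A j)).trace := by
        rw [← hA.sum_star_mul_mul Y, Matrix.mul_sum, trace_sum]

theorem hsProj_eq (hA : IsBalancedBasis 𝒜 A σ) {E : Mat n →ₗ[ℂ] Mat n}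
    (hE : IsHSProj (Subalgebra.toSubmodule 𝒜.toSubalgebra) E) :
    E = ∑ j, hsRankOne (A j) (A j) :=
  hE.unique hA.isHSProj_sum_hsRankOne

theorem isHSProj_centralizer (hA : IsBalancedBasis 𝒜 A σ) (hJ : (Fintype.card J : ℂ) ≠ 0) :
    IsHSProj (Subalgebra.toSubmodule (Subalgebra.centralizer ℂ (𝒜 : Set (Mat n))))
      (((n : ℂ) / Fintype.card J) • ∑ j, LinearMap.mulLeftRight ℂ (A j, star (A j))) := by
  simp only [IsHSProj, LinearMap.smul_apply, LinearMap.sum_apply, LinearMap.mulLeftRight_apply]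
  refine ⟨fun X => ?_, fun X hX => ?_, fun X Y => ?_⟩
  · exact Submodule.smul_mem _ _ (hA.sum_mul_mul_star_mem_centralizer X)
  · rw [Subalgebra.mem_toSubmodule, Subalgebra.mem_centralizer_iff] at hX
    have hcomm : ∀ j, A j * X * star (A j) = A j * star (A j) * X := fun j => by
      rw [mul_assoc, ← hX _ (star_mem (hA.mem j)), mul_assoc]
    rw [Finset.sum_congr rfl fun j _ => hcomm j, ← Finset.sum_mul, div_eq_inv_mul, mul_smul,
      ← smul_mul, hA.sum_mul_star, smul_mul, one_mul, smul_smul, inv_mul_cancel₀ hJ, one_smul]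
  · rw [star_smul, smul_mul, Matrix.mul_smul, trace_smul, trace_smul,
      hA.trace_star_sum_mul_mul_star_mul]
    congr 1
    simp

theorem centralizerProj_eq (hA : IsBalancedBasis 𝒜 A σ) {E : Mat n →ₗ[ℂ] Mat n}
    (hE : IsHSProj (Subalgebra.toSubmodule (Subalgebra.centralizer ℂ (𝒜 : Set (Mat n)))) E) :
    E = ((n : ℂ) / Fintype.card J) • ∑ j, LinearMap.mulLeftRight ℂ (A j, star (A j)) := by
  rcases subsingleton_or_nontrivial (Mat n) with h | h
  · exact LinearMap.ext fun _ => Subsingleton.elim _ _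
  · have := hA.nonempty
    exact hE.unique (hA.isHSProj_centralizer (Nat.cast_ne_zero.mpr Fintype.card_ne_zero))

end IsBalancedBasis

variable {K : Type*} [Fintype K] [DecidableEq K]
  {ℬ : StarSubalgebra ℂ (Mat n)} {B : K → Mat n} {τ : Equiv.Perm K}

theorem trace_hsProj_comp_hsProj (hA : IsBalancedBasis 𝒜 A σ) (hB : IsBalancedBasis ℬ B τ)
    {E F : Mat n →ₗ[ℂ] Mat n} (hE : IsHSProj (Subalgebra.toSubmodule 𝒜.toSubalgebra) E)
    (hF : IsHSProj (Subalgebra.toSubmodule ℬ.toSubalgebra) F) :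
    LinearMap.trace ℂ (Mat n) (E ∘ₗ F) =
      ∑ i, ∑ j, (star (A i) * B j).trace * (star (B j) * A i).trace := by
  rw [hA.hsProj_eq hE, ← Module.End.mul_eq_comp, Finset.sum_mul, map_sum]
  refine Finset.sum_congr rfl fun i _ => ?_
  rw [Module.End.mul_eq_comp, trace_hsRankOne_comp, hB.hsProj_eq hF]
  simp [Matrix.mul_sum, mul_comm]

theorem trace_centralizerProj_comp_centralizerProj (hA : IsBalancedBasis 𝒜 A σ)
    (hB : IsBalancedBasis ℬ B τ) {E F : Mat n →ₗ[ℂ] Mat n}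
    (hE : IsHSProj (Subalgebra.toSubmodule (Subalgebra.centralizer ℂ (𝒜 : Set (Mat n)))) E)
    (hF : IsHSProj (Subalgebra.toSubmodule (Subalgebra.centralizer ℂ (ℬ : Set (Mat n)))) F) :
    LinearMap.trace ℂ (Mat n) (E ∘ₗ F) = (n / Fintype.card J * (n / Fintype.card K)) *
      ∑ i, ∑ j, (star (A i) * B j).trace * (star (B j) * A i).trace := by
  rw [hA.centralizerProj_eq hE, hB.centralizerProj_eq hF, ← Module.End.mul_eq_comp,
    smul_mul_smul, Finset.sum_mul_sum, map_smul, map_sum, smul_eq_mul, ← Equiv.sum_comp σ]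
  simp only [map_sum, LinearMap.mulLeftRight_mul_mulLeftRight, Matrix.trace_mulLeftRight,
    hA.apply_perm, star_star]

end BalancedBasis

section Blocks

variable {ι : Type} (p q : ι → ℕ)

abbrev Blocks := ∀ k, Matrix (Fin (p k)) (Fin (p k)) ℂ

def blockSwap : Equiv.Perm (Σ k, Fin (p k) × Fin (p k)) :=
  Equiv.sigmaCongrRight fun _ => Equiv.prodComm _ _

def blockWeight (k : ι) : ℂ := ((√(q k : ℝ))⁻¹ : ℝ)

theorem star_blockWeight (k : ι) : star (blockWeight q k) = blockWeight q k :=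
  Complex.conj_ofReal _

variable {q} in
theorem natCast_mul_blockWeight_mul_self {k : ι} (hk : 0 < q k) :
    (q k : ℂ) * blockWeight q k * blockWeight q k = 1 := by
  have hq : (0 : ℝ) < q k := Nat.cast_pos.mpr hk
  rw [blockWeight, mul_assoc, ← Complex.ofReal_mul, ← mul_inv, Real.mul_self_sqrt hq.le,
    Complex.ofReal_inv, Complex.ofReal_natCast, mul_inv_cancel₀ (by exact_mod_cast hk.ne')]

variable {p}

def blockInner [Fintype ι] (A B : Blocks p) : ℂ := ∑ k, (q k : ℂ) * (star (A k) * B k).trace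

theorem blockInner_eq_sum [Fintype ι] (A B : Blocks p) :
    blockInner q A B = ∑ x : Σ k, Fin (p k) × Fin (p k),
      (q x.1 : ℂ) * star (A x.1 x.2.1 x.2.2) * B x.1 x.2.1 x.2.2 := by
  simp only [blockInner, trace, diag, mul_apply, star_apply, Fintype.sum_sigma,
    Fintype.sum_prod_type, Finset.mul_sum, mul_assoc]
  exact Finset.sum_congr rfl fun k _ => Finset.sum_comm

variable [DecidableEq ι]

def blockUnit (m : Σ k, Fin (p k) × Fin (p k)) : Blocks p :=
  fun l a b => if (⟨l, a, b⟩ : Σ k, Fin (p k) × Fin (p k)) = m then blockWeight q l else 0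

theorem blockUnit_apply (m x : Σ k, Fin (p k) × Fin (p k)) :
    blockUnit q m x.1 x.2.1 x.2.2 = if x = m then blockWeight q x.1 else 0 := rfl

theorem star_blockUnit (m : Σ k, Fin (p k) × Fin (p k)) :
    star (blockUnit q m) = blockUnit q (blockSwap p m) := by
  ext l a b
  have hswap : ((⟨l, a, b⟩ : Σ k, Fin (p k) × Fin (p k)) = blockSwap p m) ↔
      (⟨l, b, a⟩ : Σ k, Fin (p k) × Fin (p k)) = m :=
    (blockSwap p).injective.eq_iff (a := ⟨l, b, a⟩)
  simp only [Pi.star_apply, star_apply, blockUnit, hswap, apply_ite star, star_zero,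
    star_blockWeight]

variable [Fintype ι]

theorem blockInner_blockUnit_left (m : Σ k, Fin (p k) × Fin (p k)) (B : Blocks p) :
    blockInner q (blockUnit q m) B = q m.1 * blockWeight q m.1 * B m.1 m.2.1 m.2.2 := by
  simp [blockInner_eq_sum, blockUnit_apply, apply_ite star, star_blockWeight, ite_mul]

theorem sum_blockUnit_mul_star :
    ∑ m, blockUnit q m * star (blockUnit q m) = fun l =>
      ((p l : ℂ) * blockWeight q l * blockWeight q l) • (1 : Matrix (Fin (p l)) (Fin (p l)) ℂ) := by
  ext l a b
  simp only [Finset.sum_apply, Matrix.sum_apply, Pi.mul_apply, mul_apply, Pi.star_apply,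
    star_apply, blockUnit, apply_ite star, star_zero, star_blockWeight, ite_mul, mul_ite,
    zero_mul, mul_zero]
  rw [Finset.sum_comm]
  simp [one_apply, mul_assoc]

variable {q}

theorem blockInner_blockUnit_blockUnit (hq : ∀ k, 0 < q k) (m m' : Σ k, Fin (p k) × Fin (p k)) :
    blockInner q (blockUnit q m) (blockUnit q m') = if m = m' then 1 else 0 := by
  rw [blockInner_blockUnit_left, blockUnit_apply]
  split_ifs with h
  · rw [h, natCast_mul_blockWeight_mul_self (hq _)]
  · rw [mul_zero]

theorem sum_blockInner_blockUnit_smul (hq : ∀ k, 0 < q k) (B : Blocks p) :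
    ∑ m, blockInner q (blockUnit q m) B • blockUnit q m = B := by
  ext l a b
  simp only [Finset.sum_apply, Matrix.sum_apply, Pi.smul_apply, Matrix.smul_apply, smul_eq_mul,
    blockUnit, mul_ite, mul_zero, Finset.sum_ite_eq, Finset.mem_univ, if_true,
    blockInner_blockUnit_left]
  linear_combination B l a b * natCast_mul_blockWeight_mul_self (hq l)

theorem natCast_smul_sum_blockUnit_mul_star (hq : ∀ k, 0 < q k)
    (hbal : ∀ k l, p k * q l = p l * q k) :
    ((∑ k, p k * q k : ℕ) : ℂ) • (∑ m, blockUnit q m * star (blockUnit q m) : Blocks p) =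
      (Fintype.card (Σ k, Fin (p k) × Fin (p k)) : ℂ) • 1 := by
  rw [sum_blockUnit_mul_star]
  ext1 l
  have hcount : ((∑ k, p k * q k : ℕ) : ℂ) * p l =
      (Fintype.card (Σ k, Fin (p k) × Fin (p k)) : ℂ) * q l := by
    norm_cast
    simp only [Fintype.card_sigma, Fintype.card_prod, Fintype.card_fin, Finset.sum_mul]
    refine Finset.sum_congr rfl fun k _ => ?_
    rw [mul_assoc, mul_comm (q k), ← hbal, mul_assoc]
  rw [Pi.smul_apply, Pi.smul_apply, smul_smul, Pi.one_apply]
  congr 1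
  linear_combination (blockWeight q l * blockWeight q l) * hcount +
    (Fintype.card (Σ k, Fin (p k) × Fin (p k)) : ℂ) * natCast_mul_blockWeight_mul_self (hq l)

variable (p q)

def blockKronOne :
    Blocks p →⋆ₐ[ℂ] Matrix (Σ k, Fin (p k) × Fin (q k)) (Σ k, Fin (p k) × Fin (q k)) ℂ where
  toFun A := blockDiagonal' fun k => A k ⊗ₖ (1 : Matrix (Fin (q k)) (Fin (q k)) ℂ)
  map_one' := (congrArg blockDiagonal' (funext fun _ => one_kronecker_one)).trans
    blockDiagonal'_one
  map_mul' A B := by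
    rw [← blockDiagonal'_mul]
    exact congrArg blockDiagonal' (funext fun k => by rw [← mul_kronecker_mul, mul_one]; rfl)
  map_zero' := (congrArg blockDiagonal' (funext fun _ => zero_kronecker _)).trans
    blockDiagonal'_zero
  map_add' A B := by
    rw [← blockDiagonal'_add]
    exact congrArg blockDiagonal' (funext fun k => add_kronecker _ _ _)
  commutes' c := by
    rw [Algebra.algebraMap_eq_smul_one, Algebra.algebraMap_eq_smul_one, ← blockDiagonal'_one,
      ← blockDiagonal'_smul]
    exact congrArg blockDiagonal' (funext fun k => by
      simp only [Pi.smul_apply, Pi.one_apply, smul_kronecker, one_kronecker_one])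
  map_star' A := by
    simp only [Pi.star_apply, star_eq_conjTranspose, blockDiagonal'_conjTranspose,
      conjTranspose_kronecker, conjTranspose_one]

variable {p q} {n : ℕ} (e : (Σ k, Fin (p k) × Fin (q k)) ≃ Fin n) (U : unitary (Mat n))

def blockEmbedding : Blocks p →⋆ₐ[ℂ] Mat n :=
  (Unitary.conjStarAlgAut ℂ (Mat n) U).toStarAlgHom.comp <|
    (StarAlgEquiv.ofAlgEquiv (reindexAlgEquiv ℂ ℂ e) fun M => by
      simp only [star_eq_conjTranspose, coe_reindexAlgEquiv, reindex_apply,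
        conjTranspose_submatrix]).toStarAlgHom.comp (blockKronOne p q)

theorem trace_blockEmbedding (A : Blocks p) :
    (blockEmbedding e U A).trace = ∑ k, (q k : ℂ) * (A k).trace := by
  change ((U : Mat n) * reindex e e (blockDiagonal' fun k => A k ⊗ₖ 1) * star (U : Mat n)).trace = _
  rw [trace_mul_cycle, Unitary.star_mul_self_of_mem U.2, one_mul]
  change ∑ i, (blockDiagonal' fun k => A k ⊗ₖ 1).diag (e.symm i) = _
  rw [Equiv.sum_comp e.symm, ← trace, trace_blockDiagonal']
  simp only [trace_kronecker, trace_one, Fintype.card_fin, mul_comm]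

theorem trace_star_blockEmbedding_mul (A B : Blocks p) :
    (star (blockEmbedding e U A) * blockEmbedding e U B).trace = blockInner q A B := by
  rw [← map_star, ← map_mul, trace_blockEmbedding]
  rfl

theorem isBalancedBasis_blockEmbedding {𝒜 : StarSubalgebra ℂ (Mat n)} (hq : ∀ k, 0 < q k)
    (hbal : ∀ k l, p k * q l = p l * q k) (hmem : ∀ X, X ∈ 𝒜 ↔ ∃ A, X = blockEmbedding e U A) :
    IsBalancedBasis 𝒜 (fun m => blockEmbedding e U (blockUnit q m)) (blockSwap p) where
  mem m := (hmem _).mpr ⟨_, rfl⟩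
  trace_star_mul i j := by
    rw [trace_star_blockEmbedding_mul, blockInner_blockUnit_blockUnit hq]
  sum_trace_smul X hX := by
    obtain ⟨B, rfl⟩ := (hmem X).mp hX
    simp only [trace_star_blockEmbedding_mul, ← map_smul, ← map_sum,
      sum_blockInner_blockUnit_smul hq]
  apply_perm m := by
    rw [← star_blockUnit, map_star]
  sum_mul_star := by
    have hn : ((∑ k, p k * q k : ℕ) : ℂ) = n := by
      exact_mod_cast by simpa [Fintype.card_sigma] using Fintype.card_congr e
    simp only [← map_star, ← map_mul, ← map_sum]
    rw [← map_smul, ← hn, natCast_smul_sum_blockUnit_mul_star hq hbal, map_smul, map_one]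

end Blocks

theorem IsHomBalanced.exists_isBalancedBasis {n : ℕ} {𝒜 : StarSubalgebra ℂ (Mat n)}
    (h : IsHomBalanced 𝒜) : ∃ (J : Type) (_ : Fintype J) (_ : DecidableEq J) (A : J → Mat n)
      (σ : Equiv.Perm J), IsBalancedBasis 𝒜 A σ := by
  obtain ⟨ι, _, _, p, q, e, U, hU, hU', hpq, hbal, hmem⟩ := h
  exact ⟨_, inferInstance, inferInstance, _, _,
    isBalancedBasis_blockEmbedding e ⟨U, hU', hU⟩ (fun k => (hpq k).2) hbal hmem⟩

/-- for homogeneously balanced `𝒜, ℬ ⊆ M_n(ℂ)`,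
`c(𝒜',ℬ') = (n² / (dim 𝒜 · dim ℬ)) · c(𝒜,ℬ)` where `c(𝒳,𝒴) = Tr(E_𝒳 E_𝒴)`. -/
theorem stmt18 {n : ℕ} (𝒜 ℬ : StarSubalgebra ℂ (Mat n))
    (hA : IsHomBalanced 𝒜) (hB : IsHomBalanced ℬ)
    (EA EB EA' EB' : Mat n →ₗ[ℂ] Mat n)
    (hEA : IsHSProj (Subalgebra.toSubmodule 𝒜.toSubalgebra) EA)
    (hEB : IsHSProj (Subalgebra.toSubmodule ℬ.toSubalgebra) EB)
    (hEA' : IsHSProj (Subalgebra.toSubmodule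
      (Subalgebra.centralizer ℂ (𝒜 : Set (Mat n)))) EA')
    (hEB' : IsHSProj (Subalgebra.toSubmodule
      (Subalgebra.centralizer ℂ (ℬ : Set (Mat n)))) EB') :
    LinearMap.trace ℂ (Mat n) (EA' ∘ₗ EB') =
      ((n : ℂ) ^ 2 / ((Module.finrank ℂ 𝒜 : ℂ) * (Module.finrank ℂ ℬ : ℂ))) *
        LinearMap.trace ℂ (Mat n) (EA ∘ₗ EB) := by
  obtain ⟨J, _, _, A, σ, hAbasis⟩ := hA.exists_isBalancedBasis
  obtain ⟨K, _, _, B, τ, hBbasis⟩ := hB.exists_isBalancedBasis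
  rw [trace_centralizerProj_comp_centralizerProj hAbasis hBbasis hEA' hEB',
    trace_hsProj_comp_hsProj hAbasis hBbasis hEA hEB, ← hAbasis.card_eq_finrank,
    ← hBbasis.card_eq_finrank, div_mul_div_comm, sq]
end
end
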